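/- (Interleaving theorem.) Let q, k, ℓ, t, n ≥ 1 be integers with t dividing k. If there exists an ℓ-valid (q,k)-colouring of n eBugs, then there exists a (t·ℓ)-valid (q, t·k)-colouring of N eBugs, where N is the natural number satisfying N·t = k^{t−1}·n^t. Consequently t · E(q, t·k, t·ℓ) ≥ k^{t−1} · E(q,k,ℓ)^t. -/

import Mathlib

/-- A `(q,k)`-colouring of `n` eBugs is `ℓ`-valid if its `ℓ`-window map is injective. -/
def ebugValid (q k ℓ n : ℕ) (c : Fin n → ZMod k → Fin q) : Prop :=
  Function.Injective (fun p : Fin n × ZMod k => fun s : Fin ℓ => c p.1 (p.2 + (s : ℕ)))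

/-- The eBug number `E(q,k,ℓ)`: the greatest `n` admitting an `ℓ`-valid `(q,k)`-colouring. -/
noncomputable def eBugNumber (q k ℓ : ℕ) : ℕ :=
  sSup {n : ℕ | ∃ c : Fin n → ZMod k → Fin q, ebugValid q k ℓ n c}

/-!
A `t`-tuple of (eBug, LED) pairs of an `ℓ`-valid colouring, read round robin, spells a cycle of
length `t * k`; rotating the cycle is an action of `ZMod (t * k)` on the `(n * k) ^ t` tuples,
and it is free because `t ∣ k`. Its `k ^ (t - 1) * n ^ t / t` orbits are the new eBugs: a window
of length `t * ℓ` contains a window of length `ℓ` of each of the `t` old eBugs, hence determines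
the tuple, hence the orbit and the position in it.
-/

open Function

section FreeAction

variable {q K L N : ℕ} {Y : Type*} [AddAction (ZMod K) Y]

theorem ebugValid_of_isCancelVAdd [IsCancelVAdd (ZMod K) Y] (col : Y → Fin q)
    (hcol : Injective fun y : Y => fun s : Fin L => col (((s : ℕ) : ZMod K) +ᵥ y))
    (ρ : Fin N → Y) (hρ : Injective fun i => (⟦ρ i⟧ : AddAction.orbitRel.Quotient (ZMod K) Y)) :
    ebugValid q K L N fun i j => col (j +ᵥ ρ i) := by
  rintro ⟨i, j⟩ ⟨i', j'⟩ hw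
  have hpoint : j +ᵥ ρ i = j' +ᵥ ρ i' := hcol <| funext fun s => by
    simp only [← add_vadd, add_comm _ j, add_comm _ j']
    exact congrFun hw s
  have hi : i = i' := hρ <| Quotient.sound <| AddAction.orbitRel_apply.mpr
    ⟨-j + j', show (-j + j') +ᵥ ρ i' = ρ i by rw [add_vadd, ← hpoint, neg_vadd_vadd]⟩
  subst hi
  rw [IsCancelVAdd.right_cancel j j' (ρ i) hpoint]

theorem card_eq_card_orbitRel_quotient_mul [IsCancelVAdd (ZMod K) Y] :
    Nat.card Y = Nat.card (AddAction.orbitRel.Quotient (ZMod K) Y) * K := by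
  rw [Nat.card_congr <| AddAction.selfEquivOrbitsQuotientProd <|
    IsCancelVAdd.stabilizer_eq_bot (G := ZMod K), Nat.card_prod, Nat.card_zmod]

end FreeAction

/-- `toFun m` is the (eBug, LED) pair read at position `m` of a cycle of length `t * k`; reading
`t` positions further on moves to the next LED of the same eBug, so the cycle interleaves the
`t` eBugs read at positions `0, …, t - 1`. -/
@[ext]
structure InterleavedState (α : Type*) (k t : ℕ) where
  toFun : ZMod (t * k) → α × ZMod k
  toFun_add_t : ∀ m, toFun (m + t) = ((toFun m).1, (toFun m).2 + 1)

namespace InterleavedState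

variable {α : Type*} {k t : ℕ}

instance : AddAction (ZMod (t * k)) (InterleavedState α k t) where
  vadd j φ := ⟨fun m => φ.toFun (m + j), fun m => by rw [add_right_comm, φ.toFun_add_t]⟩
  zero_vadd φ := by ext1; exact funext fun m => congrArg φ.toFun (add_zero m)
  add_vadd j j' φ := by ext1; exact funext fun m => congrArg φ.toFun (add_assoc m j j').symm

theorem vadd_apply (j m : ZMod (t * k)) (φ : InterleavedState α k t) :
    (j +ᵥ φ).toFun m = φ.toFun (m + j) := rfl

theorem apply_add_mul (φ : InterleavedState α k t) (m : ZMod (t * k)) (i : ℕ) :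
    φ.toFun (m + t * i) = ((φ.toFun m).1, (φ.toFun m).2 + i) := by
  induction i with
  | zero => simp
  | succ i ih =>
    rw [Nat.cast_succ, mul_add_one, ← add_assoc, φ.toFun_add_t, ih, Nat.cast_succ, add_assoc]

theorem natCast_eq_zero_of_apply_add_mul (φ : InterleavedState α k t) {m : ZMod (t * k)} {i : ℕ}
    (h : φ.toFun (m + t * i) = φ.toFun m) : (i : ZMod k) = 0 := by
  rw [apply_add_mul] at h
  simpa using congrArg Prod.snd h

theorem isCancelVAdd (htk : t ∣ k) [NeZero (t * k)] :
    IsCancelVAdd (ZMod (t * k)) (InterleavedState α k t) := by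
  refine isCancelVAdd_iff_eq_zero_of_vadd_eq.mpr fun j φ hj => ?_
  have hfix : ∀ m, φ.toFun (m + j) = φ.toFun m := fun m => congrFun (congrArg toFun hj) m
  have hfix_mul : ∀ i : ℕ, φ.toFun (0 + i * j) = φ.toFun 0 := by
    intro i
    induction i with
    | zero => simp
    | succ i ih => rw [Nat.cast_succ, add_one_mul, ← add_assoc, hfix, ih]
  rw [← ZMod.natCast_zmod_val j] at hfix hfix_mul ⊢
  -- `t` shifts by `j` advance every LED by `j`, so `k ∣ j`; as `t ∣ k`, `j = t * i`, and one
  -- shift by `t * i` advances every LED by `i`, so `k ∣ i`.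
  have hk_val : k ∣ j.val := (ZMod.natCast_eq_zero_iff _ _).mp <|
    natCast_eq_zero_of_apply_add_mul φ (hfix_mul t)
  obtain ⟨i, hi⟩ := htk.trans hk_val
  rw [hi, Nat.cast_mul] at hfix
  have hk_i : k ∣ i := (ZMod.natCast_eq_zero_iff _ _).mp <|
    natCast_eq_zero_of_apply_add_mul φ (hfix 0)
  rw [hi, ZMod.natCast_eq_zero_iff]
  exact Nat.mul_dvd_mul_left t hk_i

section Restriction

variable [NeZero t] [NeZero k]

theorem toFun_eq (φ : InterleavedState α k t) (m : ZMod (t * k)) :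
    φ.toFun m = ((φ.toFun (m.val % t : ℕ)).1, (φ.toFun (m.val % t : ℕ)).2 + (m.val / t : ℕ)) := by
  conv_lhs => rw [← ZMod.natCast_zmod_val m, ← Nat.mod_add_div m.val t]
  push_cast
  exact apply_add_mul φ _ _

theorem ext_of_forall_lt {φ ψ : InterleavedState α k t}
    (h : ∀ r < t, φ.toFun r = ψ.toFun r) : φ = ψ :=
  InterleavedState.ext <| funext fun m => by
    rw [toFun_eq φ, toFun_eq ψ, h _ (Nat.mod_lt _ (NeZero.pos t))]

def ofFun (x : Fin t → α × ZMod k) : InterleavedState α k t where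
  toFun m := ((x ⟨m.val % t, Nat.mod_lt _ (NeZero.pos t)⟩).1,
    (x ⟨m.val % t, Nat.mod_lt _ (NeZero.pos t)⟩).2 + (m.val / t : ℕ))
  toFun_add_t m := by
    have hval : (m + t).val = (m.val + t) % (t * k) := by
      rw [← ZMod.val_natCast, Nat.cast_add, ZMod.natCast_zmod_val]
    have hmod : (m + t).val % t = m.val % t := by
      rw [hval, Nat.mod_mod_of_dvd _ (dvd_mul_right t k), Nat.add_mod_right]
    have hdiv : (((m + t).val / t : ℕ) : ZMod k) = (m.val / t : ℕ) + 1 := by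
      rw [hval, Nat.mod_mul_right_div_self, ZMod.natCast_mod, Nat.add_div_right _ (NeZero.pos t),
        Nat.cast_succ]
    simp only [hmod, hdiv, add_assoc]

def equivFun : InterleavedState α k t ≃ (Fin t → α × ZMod k) where
  toFun φ r := φ.toFun r
  invFun := ofFun
  left_inv φ := ext_of_forall_lt fun r hr => by
    simp [ofFun, ZMod.val_cast_of_lt (hr.trans_le (Nat.le_mul_of_pos_right t (NeZero.pos k))),
      Nat.mod_eq_of_lt hr, Nat.div_eq_of_lt hr]
  right_inv x := funext fun r => by
    simp [ofFun, ZMod.val_cast_of_lt (r.isLt.trans_le (Nat.le_mul_of_pos_right t (NeZero.pos k))),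
      Nat.mod_eq_of_lt r.isLt, Nat.div_eq_of_lt r.isLt]

theorem natCard_eq : Nat.card (InterleavedState α k t) = (Nat.card α * k) ^ t := by
  rw [Nat.card_congr equivFun, Nat.card_fun, Nat.card_prod, Nat.card_zmod, Nat.card_fin]

def colour {β : Type*} (c : α → ZMod k → β) (φ : InterleavedState α k t) : β :=
  c (φ.toFun 0).1 (φ.toFun 0).2

theorem injective_colour_window {q n ℓ : ℕ} {c : Fin n → ZMod k → Fin q}
    (hc : ebugValid q k ℓ n c) :
    Injective fun φ : InterleavedState (Fin n) k t =>
      fun s : Fin (t * ℓ) => colour c (((s : ℕ) : ZMod (t * k)) +ᵥ φ) := by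
  intro φ ψ h
  have hread : ∀ s < t * ℓ, c (φ.toFun s).1 (φ.toFun s).2 = c (ψ.toFun s).1 (ψ.toFun s).2 :=
    fun s hs => by simpa [colour, vadd_apply] using congrFun h ⟨s, hs⟩
  refine ext_of_forall_lt fun r hr => hc (funext fun i => ?_)
  have hlt : r + t * i < t * ℓ := by nlinarith [i.isLt]
  have := hread _ hlt
  rwa [Nat.cast_add, Nat.cast_mul, apply_add_mul, apply_add_mul] at this

end Restriction

end InterleavedState

theorem exists_ebugValid_interleave {q k ℓ t n N : ℕ} [NeZero t] [NeZero k] (htk : t ∣ k)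
    (hN : N * t = k ^ (t - 1) * n ^ t) {c : Fin n → ZMod k → Fin q} (hc : ebugValid q k ℓ n c) :
    ∃ c' : Fin N → ZMod (t * k) → Fin q, ebugValid q (t * k) (t * ℓ) N c' := by
  have := InterleavedState.isCancelVAdd (α := Fin n) htk
  have : Finite (InterleavedState (Fin n) k t) := .of_equiv _ InterleavedState.equivFun.symm
  have hcard : Nat.card (AddAction.orbitRel.Quotient (ZMod (t * k))
      (InterleavedState (Fin n) k t)) = N := by
    have h := card_eq_card_orbitRel_quotient_mul (K := t * k) (Y := InterleavedState (Fin n) k t)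
    rw [InterleavedState.natCard_eq, Nat.card_fin] at h
    refine Nat.eq_of_mul_eq_mul_right (NeZero.pos (t * k)) (h.symm.trans ?_)
    calc (n * k) ^ t = n ^ t * (k ^ (t - 1) * k) := by rw [pow_sub_one_mul (NeZero.ne t), mul_pow]
      _ = N * (t * k) := by rw [← mul_assoc N, hN]; ring
  let e := (Finite.equivFinOfCardEq hcard).symm
  exact ⟨_, ebugValid_of_isCancelVAdd (InterleavedState.colour c)
    (InterleavedState.injective_colour_window hc) (fun i => (e i).out) (by simpa using e.injective)⟩

section eBugNumber

variable {q k ℓ : ℕ} [NeZero k]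

theorem bddAbove_setOf_ebugValid :
    BddAbove {n : ℕ | ∃ c : Fin n → ZMod k → Fin q, ebugValid q k ℓ n c} := by
  refine ⟨q ^ ℓ, ?_⟩
  rintro n ⟨_, hc⟩
  have h := Nat.card_le_card_of_injective _ hc
  rw [Nat.card_prod, Nat.card_fun, Nat.card_fin, Nat.card_fin, Nat.card_fin, Nat.card_zmod] at h
  exact (Nat.le_mul_of_pos_right n (NeZero.pos k)).trans h

theorem exists_ebugValid_eBugNumber :
    ∃ c : Fin (eBugNumber q k ℓ) → ZMod k → Fin q, ebugValid q k ℓ (eBugNumber q k ℓ) c :=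
  Nat.sSup_mem (s := {n | ∃ c : Fin n → ZMod k → Fin q, ebugValid q k ℓ n c})
    ⟨0, finZeroElim, fun p => p.1.elim0⟩ bddAbove_setOf_ebugValid

theorem le_eBugNumber {n : ℕ} {c : Fin n → ZMod k → Fin q} (hc : ebugValid q k ℓ n c) :
    n ≤ eBugNumber q k ℓ :=
  le_csSup bddAbove_setOf_ebugValid ⟨c, hc⟩

end eBugNumber

theorem stmt12_general (q k ℓ t n : ℕ) (hk : 1 ≤ k) (ht : 1 ≤ t)
    (htk : t ∣ k)
    (h : ∃ c : Fin n → ZMod k → Fin q, ebugValid q k ℓ n c) :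
    (∀ N : ℕ, N * t = k ^ (t - 1) * n ^ t →
      ∃ c : Fin N → ZMod (t * k) → Fin q, ebugValid q (t * k) (t * ℓ) N c) ∧
    k ^ (t - 1) * eBugNumber q k ℓ ^ t ≤ t * eBugNumber q (t * k) (t * ℓ) := by
  have : NeZero k := ⟨by omega⟩
  have : NeZero t := ⟨by omega⟩
  obtain ⟨c, hc⟩ := h
  refine ⟨fun N hN => exists_ebugValid_interleave htk hN hc, ?_⟩
  have hdvd : t ∣ k ^ (t - 1) * eBugNumber q k ℓ ^ t := by
    obtain rfl | ht1 := eq_or_ne t 1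
    · exact one_dvd _
    · exact (htk.trans (dvd_pow_self k (by omega))).mul_right _
  obtain ⟨N, hN⟩ := hdvd
  obtain ⟨cE, hcE⟩ := exists_ebugValid_eBugNumber (q := q) (k := k) (ℓ := ℓ)
  obtain ⟨c', hc'⟩ := exists_ebugValid_interleave htk (N := N) (by rw [hN, mul_comm]) hcE
  calc k ^ (t - 1) * eBugNumber q k ℓ ^ t = t * N := hN
    _ ≤ t * eBugNumber q (t * k) (t * ℓ) := Nat.mul_le_mul_left t (le_eBugNumber hc')

theorem stmt12 (q k ℓ t n : ℕ) (hq : 1 ≤ q) (hk : 1 ≤ k) (hℓ : 1 ≤ ℓ) (ht : 1 ≤ t)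
    (hn : 1 ≤ n) (htk : t ∣ k)
    (h : ∃ c : Fin n → ZMod k → Fin q, ebugValid q k ℓ n c) :
    (∀ N : ℕ, N * t = k ^ (t - 1) * n ^ t →
      ∃ c : Fin N → ZMod (t * k) → Fin q, ebugValid q (t * k) (t * ℓ) N c) ∧
    k ^ (t - 1) * eBugNumber q k ℓ ^ t ≤ t * eBugNumber q (t * k) (t * ℓ) :=
  stmt12_general q k ℓ t n hk ht htk h
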